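/- Let F = (X; f₁,…,f_N) and G = (Y; g₁,…,g_N) be point-fibred IFSs on compact Hausdorff spaces X and Y with attractors A_F, A_G and coding maps π_F, π_G, let τ_F : A_F → Ω_F be a section of π_F, and let T_FG = π_G ∘ τ_F. If Ω_F is also an address space for G, and if for all σ, ω in the closure of Ω_F in I^∞ one has π_F(σ) = π_F(ω) if and only if π_G(σ) = π_G(ω), then T_FG : A_F → A_G is a homeomorphism, and T_GF = T_FG^{-1}, where T_GF = π_F ∘ τ_G with τ_G the section of π_G corresponding to the address space Ω_G := Ω_F. -/

import Mathlib

/-!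
The coding maps are continuous: a cylinder of length `k` around `σ` is sent into the compact set
`f_{σ|k}(X)`, and these sets shrink to the single point `π_F σ`. The compatibility hypothesis on
`Ω_F` makes `T_FG` and `T_GF` mutually inverse. On the compact set `closure Ω_F` it says that
`T_FG ∘ π_F = π_G`, and `π_F` maps `closure Ω_F` onto `A_F` as a quotient map (compact onto
Hausdorff), so `T_FG` is continuous; by symmetry so is `T_GF`.
-/

open Set Topology Filter

/-- `seqComp f σ k` is the composition `f_{σ|k} = f_{σ₁} ∘ f_{σ₂} ∘ ⋯ ∘ f_{σ_k}`
(with the sequence `σ` indexed from `0`). -/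
def seqComp {X : Type*} {N : ℕ} (f : Fin N → X → X) (σ : ℕ → Fin N) : ℕ → X → X
  | 0 => id
  | k + 1 => seqComp f σ k ∘ f (σ k)

/-- `PiMap f σ = ⋂_{k ≥ 1} f_{σ₁} ∘ ⋯ ∘ f_{σ_k}(X)`. -/
def PiMap {X : Type*} {N : ℕ} (f : Fin N → X → X) (σ : ℕ → Fin N) : Set X :=
  ⋂ k : ℕ, seqComp f σ (k + 1) '' Set.univ

section CodingMap

variable {X : Type*} {N : ℕ}

lemma seqComp_congr (f : Fin N → X → X) {σ ω : ℕ → Fin N} :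
    ∀ k, (∀ i < k, σ i = ω i) → seqComp f σ k = seqComp f ω k
  | 0, _ => rfl
  | k + 1, h => by
    simp only [seqComp, seqComp_congr f k fun i hi => h i (Nat.lt_succ_of_lt hi),
      h k (Nat.lt_succ_self k)]

lemma antitone_seqComp_image_univ (f : Fin N → X → X) (σ : ℕ → Fin N) :
    Antitone fun k => seqComp f σ (k + 1) '' univ := by
  refine antitone_nat_of_succ_le fun k => ?_
  change seqComp f σ (k + 1) ∘ f (σ (k + 1)) '' univ ⊆ _
  exact image_comp _ _ _ ▸ image_mono (subset_univ _)

lemma continuous_seqComp [TopologicalSpace X] {f : Fin N → X → X} (hf : ∀ i, Continuous (f i))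
    (σ : ℕ → Fin N) : ∀ k, Continuous (seqComp f σ k)
  | 0 => continuous_id
  | k + 1 => (continuous_seqComp hf σ k).comp (hf (σ k))

lemma continuous_of_piMap_eq_singleton [TopologicalSpace X] [CompactSpace X] [T2Space X]
    {f : Fin N → X → X} (hf : ∀ i, Continuous (f i)) {π : (ℕ → Fin N) → X}
    (hπ : ∀ σ, PiMap f σ = {π σ}) : Continuous π := by
  refine continuous_iff_continuousAt.2 fun σ U hU => ?_
  obtain ⟨k, hk⟩ : ∃ k, seqComp f σ (k + 1) '' univ ⊆ U :=
    exists_subset_nhds_of_isCompact (antitone_seqComp_image_univ f σ).directed_ge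
      (fun k => isCompact_univ.image (continuous_seqComp hf σ _))
      (by rw [← PiMap, hπ σ]; rintro x rfl; exact hU)
  have hcylinder : ∀ᶠ ω in 𝓝 σ, ∀ i ∈ Iio (k + 1), σ i = ω i :=
    (eventually_all_finite (finite_Iio _)).2 fun i _ =>
      ((continuous_apply i).continuousAt.eventually_mem
        ((isOpen_discrete {σ i}).mem_nhds rfl)).mono fun _ h => h.symm
  rw [mem_map]
  filter_upwards [hcylinder] with ω hω
  have hmem : π ω ∈ PiMap f ω := (hπ ω).symm ▸ mem_singleton _
  exact hk (seqComp_congr f (k + 1) hω ▸ mem_iInter.1 hmem k)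

end CodingMap

/-- `T_FG = fractalTransformation πG τF` and `T_GF = fractalTransformation πF τG`. -/
def fractalTransformation {ι A Y : Type*} {Ω : Set ι} (πG : ι → Y) (τ : A → Ω) :
    A → range πG :=
  fun x => ⟨πG (τ x), mem_range_self _⟩

section FractalTransformation

variable {ι X Y : Type*} {πF : ι → X} {πG : ι → Y} {Ω : Set ι}
  {τF : range πF → Ω} {τG : range πG → Ω}

lemma leftInverse_fractalTransformation (hτF : ∀ x, πF (τF x) = x)
    (hτG : ∀ y, πG (τG y) = y) (hcomp : ∀ σ ∈ Ω, ∀ ω ∈ Ω, πG σ = πG ω → πF σ = πF ω) :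
    Function.LeftInverse (fractalTransformation πF τG) (fractalTransformation πG τF) :=
  fun x => Subtype.ext <| (hcomp _ (τG _).2 _ (τF x).2 (hτG _)).trans (hτF x)

lemma continuous_fractalTransformation [TopologicalSpace ι] [CompactSpace ι]
    [TopologicalSpace X] [T2Space X] [TopologicalSpace Y] (hπF : Continuous πF)
    (hπG : Continuous πG) (hΩ : πF '' Ω = range πF) (hτF : ∀ x, πF (τF x) = x)
    (hcomp : ∀ σ ∈ closure Ω, ∀ ω ∈ closure Ω, πF σ = πF ω → πG σ = πG ω) :
    Continuous (fractalTransformation πG τF) := by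
  have : CompactSpace (closure Ω) := isCompact_iff_compactSpace.1 isClosed_closure.isCompact
  let q : closure Ω → range πF := fun σ => ⟨πF σ, mem_range_self _⟩
  have hq : Topology.IsQuotientMap q := by
    refine .of_surjective_continuous ?_ (by fun_prop)
    rintro ⟨_, ρ, rfl⟩
    obtain ⟨σ, hσ, hσρ⟩ := hΩ.symm ▸ mem_range_self ρ
    exact ⟨⟨σ, subset_closure hσ⟩, Subtype.ext hσρ⟩
  have hTq : fractalTransformation πG τF ∘ q = fun σ => ⟨πG σ, mem_range_self _⟩ :=
    funext fun σ => Subtype.ext <| hcomp _ (subset_closure (τF (q σ)).2) _ σ.2 (hτF (q σ))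
  rw [hq.continuous_iff, hTq]
  fun_prop

end FractalTransformation

theorem fractalTransformation_isHomeomorph_general
    {X : Type*} [TopologicalSpace X] [CompactSpace X] [T2Space X]
    {Y : Type*} [TopologicalSpace Y] [CompactSpace Y] [T2Space Y]
    {N : ℕ} (f : Fin N → X → X) (hf : ∀ i, Continuous (f i))
    (g : Fin N → Y → Y) (hg : ∀ i, Continuous (g i))
    (πF : (ℕ → Fin N) → X) (hπF : ∀ σ, PiMap f σ = {πF σ})
    (πG : (ℕ → Fin N) → Y) (hπG : ∀ σ, PiMap g σ = {πG σ})
    -- `Ω_F` is an address space for `F` with section `τ_F`: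
    (ΩF : Set (ℕ → Fin N)) (hΩF : πF '' ΩF = Set.range πF)
    (τF : Set.range πF → ΩF) (hτF : ∀ x : Set.range πF, πF (τF x) = (x : X))
    -- `Ω_G := Ω_F` is also an address space for `G`, with section `τ_G`:
    (hΩG : πG '' ΩF = Set.range πG)
    (τG : Set.range πG → ΩF) (hτG : ∀ y : Set.range πG, πG (τG y) = (y : Y))
    -- the compatibility hypothesis on the closure of `Ω_F`:
    (hcomp : ∀ σ ∈ closure ΩF, ∀ ω ∈ closure ΩF, (πF σ = πF ω ↔ πG σ = πG ω)) :
    IsHomeomorph (fun x : Set.range πF =>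
        (⟨πG (τF x), Set.mem_range_self ((τF x : ℕ → Fin N))⟩ : Set.range πG)) ∧
      (∀ x : Set.range πF,
        (⟨πF (τG ⟨πG (τF x), Set.mem_range_self ((τF x : ℕ → Fin N))⟩),
          Set.mem_range_self _⟩ : Set.range πF) = x) ∧
      (∀ y : Set.range πG,
        (⟨πG (τF ⟨πF (τG y), Set.mem_range_self ((τG y : ℕ → Fin N))⟩),
          Set.mem_range_self _⟩ : Set.range πG) = y) := by
  have hπFc := continuous_of_piMap_eq_singleton hf hπF
  have hπGc := continuous_of_piMap_eq_singleton hg hπG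
  have hcompΩ σ (hσ : σ ∈ ΩF) ω (hω : ω ∈ ΩF) :=
    hcomp σ (subset_closure hσ) ω (subset_closure hω)
  have hST := leftInverse_fractalTransformation hτF hτG fun σ hσ ω hω => (hcompΩ σ hσ ω hω).2
  have hTS := leftInverse_fractalTransformation hτG hτF fun σ hσ ω hω => (hcompΩ σ hσ ω hω).1
  let T : Set.range πF ≃ₜ Set.range πG :=
    { toFun := fractalTransformation πG τF
      invFun := fractalTransformation πF τG
      left_inv := hST
      right_inv := hTS
      continuous_toFun := continuous_fractalTransformation hπFc hπGc hΩF hτF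
        fun σ hσ ω hω => (hcomp σ hσ ω hω).1
      continuous_invFun := continuous_fractalTransformation hπGc hπFc hΩG hτG
        fun σ hσ ω hω => (hcomp σ hσ ω hω).2 }
  exact ⟨T.isHomeomorph, hST, hTS⟩

/-- Let `F`, `G` be point-fibred IFSs on compact Hausdorff spaces with
coding maps `π_F`, `π_G`, attractors `A_F = range π_F`, `A_G = range π_G`, and let
`τ_F : A_F → Ω_F` be a section of `π_F` with `T_FG = π_G ∘ τ_F`. If `Ω_F` is also an
address space for `G` (with section `τ_G` and `T_GF = π_F ∘ τ_G`), and for all `σ, ω`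
in the closure of `Ω_F`, `π_F σ = π_F ω ↔ π_G σ = π_G ω`, then `T_FG` is a
homeomorphism and `T_GF = T_FG⁻¹`. -/
theorem fractalTransformation_isHomeomorph
    {X : Type*} [TopologicalSpace X] [CompactSpace X] [T2Space X] [Nonempty X]
    {Y : Type*} [TopologicalSpace Y] [CompactSpace Y] [T2Space Y] [Nonempty Y]
    {N : ℕ} (f : Fin N → X → X) (hf : ∀ i, Continuous (f i))
    (g : Fin N → Y → Y) (hg : ∀ i, Continuous (g i))
    (πF : (ℕ → Fin N) → X) (hπF : ∀ σ, PiMap f σ = {πF σ})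
    (πG : (ℕ → Fin N) → Y) (hπG : ∀ σ, PiMap g σ = {πG σ})
    -- `Ω_F` is an address space for `F` with section `τ_F`:
    (ΩF : Set (ℕ → Fin N)) (hΩF : πF '' ΩF = Set.range πF) (hinjF : Set.InjOn πF ΩF)
    (τF : Set.range πF → ΩF) (hτF : ∀ x : Set.range πF, πF (τF x) = (x : X))
    -- `Ω_G := Ω_F` is also an address space for `G`, with section `τ_G`:
    (hΩG : πG '' ΩF = Set.range πG) (hinjG : Set.InjOn πG ΩF)
    (τG : Set.range πG → ΩF) (hτG : ∀ y : Set.range πG, πG (τG y) = (y : Y))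
    -- the compatibility hypothesis on the closure of `Ω_F`:
    (hcomp : ∀ σ ∈ closure ΩF, ∀ ω ∈ closure ΩF, (πF σ = πF ω ↔ πG σ = πG ω)) :
    IsHomeomorph (fun x : Set.range πF =>
        (⟨πG (τF x), Set.mem_range_self ((τF x : ℕ → Fin N))⟩ : Set.range πG)) ∧
      (∀ x : Set.range πF,
        (⟨πF (τG ⟨πG (τF x), Set.mem_range_self ((τF x : ℕ → Fin N))⟩),
          Set.mem_range_self _⟩ : Set.range πF) = x) ∧
      (∀ y : Set.range πG,
        (⟨πG (τF ⟨πF (τG y), Set.mem_range_self ((τG y : ℕ → Fin N))⟩),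
          Set.mem_range_self _⟩ : Set.range πG) = y) :=
  fractalTransformation_isHomeomorph_general f hf g hg πF hπF πG hπG ΩF hΩF τF hτF hΩG τG hτG hcomp
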